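/- arXiv:1610.09408 — 2 statements merged into one kernel-verified Lean document; each statement's English description precedes it below -/
import Mathlib

section
/- The series Ψ⁺₀ satisfies the quantum spectral curve equation (β•D − S(R₊)) Ψ⁺₀ = 0, where S(R₊) := Σ_{k=1}^L k s_k R₊^k is the polynomial S evaluated at the operator R₊; that is, β•(D Ψ⁺₀) = Σ_{k=1}^L k s_k R₊^k Ψ⁺₀. -/
open Polynomial

/-- The Euler operator `D = x d/dx` on formal Laurent series: `(D f)_n = n • f_n`. -/
noncomputable def eulerD (R : Type*) [CommRing R] : Module.End R (LaurentSeries R) where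
  toFun f :=
    { coeff := fun n => n • f.coeff n
      isPWO_support' := f.isPWO_support'.mono (fun n hn => by
        simp only [Function.mem_support, ne_eq] at hn ⊢
        exact fun h => hn (by rw [h, smul_zero])) }
  map_add' f g := by
    ext n
    simp [smul_add]
  map_smul' r f := by
    ext n
    simp only [HahnSeries.coeff_smul, RingHom.id_apply, zsmul_eq_mul, smul_eq_mul]
    ring

/-- Multiplication by a fixed Laurent series `u`, as an `R`-linear endomorphism. -/
noncomputable def mulOp (R : Type*) [CommRing R] (u : LaurentSeries R) :
    Module.End R (LaurentSeries R) where
  toFun f := u * f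
  map_add' f g := mul_add u f g
  map_smul' r f := by
    simp only [RingHom.id_apply]
    rw [← HahnSeries.C_mul_eq_smul, ← HahnSeries.C_mul_eq_smul, mul_left_comm]

/-- Multiplication by `x` on formal Laurent series. -/
noncomputable def mulX (R : Type*) [CommRing R] : Module.End R (LaurentSeries R) :=
  mulOp R (HahnSeries.single (1 : ℤ) (1 : R))

/-- The recursion operator `R₊ = γ x G(β D)`. -/
noncomputable def Rplus (R : Type*) [CommRing R] (β γ : R) (G : R[X]) :
    Module.End R (LaurentSeries R) :=
  γ • (mulX R ∘ₗ Polynomial.aeval (β • eulerD R) G)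

/-- The recursion operator `R₋ = γ x G(−β D)`. -/
noncomputable def Rminus (R : Type*) [CommRing R] (β γ : R) (G : R[X]) :
    Module.End R (LaurentSeries R) :=
  γ • (mulX R ∘ₗ Polynomial.aeval ((-β) • eulerD R) G)

/-!
On coefficients, `G(βD)` multiplies `x^n` by `G(nβ)`, so `R₊` sends `x^{n-1}` to `γ G((n-1)β) x^n`.
Writing `Ψ⁺₀ = Σ w_n h_n x^n` with weights `w_n = γ ρ_{n-1}`, the recursion
`w_{n+1} = γ G(nβ) w_n` makes `R₊^k` act as the shift `h_n ↦ h_{n-k}` on the second factor.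
The coefficient of `x^n` in the equation is then `w_n` times the recurrence for `h_n`, which
also holds for `n ≤ 0` because `h` vanishes at negative indices.
-/

lemma coeff_eulerD {R : Type*} [CommRing R] (f : LaurentSeries R) (n : ℤ) :
    (eulerD R f).coeff n = n • f.coeff n :=
  rfl

lemma coeff_mulX {R : Type*} [CommRing R] (f : LaurentSeries R) (n : ℤ) :
    (mulX R f).coeff n = f.coeff (n - 1) := by
  change (HahnSeries.single (1 : ℤ) (1 : R) * f).coeff n = _
  rw [HahnSeries.coeff_single_mul, one_mul]

lemma coeff_smul_eulerD_pow {R : Type*} [CommRing R] (β : R) (f : LaurentSeries R) (n : ℤ)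
    (i : ℕ) : (((β • eulerD R) ^ i) f).coeff n = ((n : R) * β) ^ i * f.coeff n := by
  induction i with
  | zero => simp
  | succ i ih =>
    rw [pow_succ', Module.End.mul_apply, LinearMap.smul_apply, HahnSeries.coeff_smul,
      coeff_eulerD, ih, zsmul_eq_mul, smul_eq_mul, pow_succ]
    ring

lemma coeff_aeval_smul_eulerD {R : Type*} [CommRing R] (β : R) (G : R[X])
    (f : LaurentSeries R) (n : ℤ) :
    ((aeval (β • eulerD R) G) f).coeff n = G.eval ((n : R) * β) * f.coeff n := by
  induction G using Polynomial.induction_on' with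
  | add p q hp hq =>
    rw [map_add, LinearMap.add_apply, HahnSeries.coeff_add, hp, hq, eval_add, add_mul]
  | monomial i a =>
    rw [aeval_monomial, Module.End.mul_apply, Module.algebraMap_end_apply,
      HahnSeries.coeff_smul, coeff_smul_eulerD_pow, eval_monomial, smul_eq_mul, mul_assoc]

lemma coeff_Rplus {R : Type*} [CommRing R] (β γ : R) (G : R[X]) (f : LaurentSeries R)
    (n : ℤ) :
    (Rplus R β γ G f).coeff n = γ * G.eval (((n - 1 : ℤ) : R) * β) * f.coeff (n - 1) := by
  rw [Rplus, LinearMap.smul_apply, HahnSeries.coeff_smul, LinearMap.comp_apply, coeff_mulX,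
    coeff_aeval_smul_eulerD, smul_eq_mul, mul_assoc]

lemma coeff_Rplus_pow_of_weighted {R : Type*} [CommRing R] (β γ : R) (G : R[X]) (w a : ℤ → R)
    (hw : ∀ n : ℤ, w (n + 1) = γ * G.eval ((n : R) * β) * w n) (f : LaurentSeries R)
    (hf : ∀ n : ℤ, f.coeff n = w n * a n) (k : ℕ) (n : ℤ) :
    ((Rplus R β γ G ^ k) f).coeff n = w n * a (n - k) := by
  induction k generalizing n with
  | zero => simpa using hf n
  | succ k ih =>
    rw [pow_succ', Module.End.mul_apply, coeff_Rplus, ih, ← mul_assoc,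
      ← hw, sub_add_cancel, Nat.cast_succ, sub_sub, add_comm (1 : ℤ)]

lemma recurrence_of_vanishing_neg {R : Type*} [CommRing R] (β : R) (L : ℕ) (s : ℕ → R)
    (h : ℤ → R) (hneg : ∀ n : ℤ, n < 0 → h n = 0)
    (hrec : ∀ n : ℤ, 1 ≤ n →
      β * (n : R) * h n = ∑ k ∈ Finset.Icc 1 L, (k : R) * s k * h (n - (k : ℤ)))
    (n : ℤ) : β * (n : R) * h n = ∑ k ∈ Finset.Icc 1 L, (k : R) * s k * h (n - (k : ℤ)) := by
  rcases le_or_gt 1 n with hn | hn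
  · exact hrec n hn
  have hlhs : (n : R) * h n = 0 := by
    rcases (show n ≤ 0 by omega).lt_or_eq with hlt | rfl
    · rw [hneg n hlt, mul_zero]
    · rw [Int.cast_zero, zero_mul]
  rw [mul_assoc, hlhs, mul_zero, eq_comm]
  refine Finset.sum_eq_zero fun k hk => ?_
  have hk : (1 : ℤ) ≤ k := by exact_mod_cast (Finset.mem_Icc.mp hk).1
  rw [hneg _ (by omega), mul_zero]

theorem quantum_spectral_curve_general (R : Type*) [CommRing R] (β γ : R) (G : R[X])
    (ρ : ℤ → Rˣ)
    (hρ : ∀ n : ℤ, (ρ n : R) = γ * G.eval ((n : R) * β) * (ρ (n - 1) : R))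
    (L : ℕ) (s : ℕ → R)
    (h : ℤ → R) (hneg : ∀ n : ℤ, n < 0 → h n = 0)
    (hrec : ∀ n : ℤ, 1 ≤ n →
      β * (n : R) * h n = ∑ k ∈ Finset.Icc 1 L, (k : R) * s k * h (n - (k : ℤ)))
    (Ψ0 : LaurentSeries R)
    (hΨ0 : ∀ n : ℤ, Ψ0.coeff n = γ * (ρ (n - 1) : R) * h n) :
    β • (eulerD R Ψ0) =
      ∑ k ∈ Finset.Icc 1 L, ((k : R) * s k) • ((Rplus R β γ G ^ k) Ψ0) := by
  set w : ℤ → R := fun n => γ * (ρ (n - 1) : R)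
  have hw : ∀ n : ℤ, w (n + 1) = γ * G.eval ((n : R) * β) * w n := fun n => by
    simp only [w, add_sub_cancel_right, hρ n]
    ring
  have hshift := coeff_Rplus_pow_of_weighted β γ G w h hw Ψ0 hΨ0
  ext n
  simp only [HahnSeries.coeff_smul, HahnSeries.coeff_sum, coeff_eulerD, hshift, hΨ0,
    smul_eq_mul, zsmul_eq_mul]
  calc β * ((n : R) * (w n * h n))
      = w n * (β * (n : R) * h n) := by ring
    _ = w n * ∑ k ∈ Finset.Icc 1 L, (k : R) * s k * h (n - (k : ℤ)) := by
        rw [recurrence_of_vanishing_neg β L s h hneg hrec n]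
    _ = ∑ k ∈ Finset.Icc 1 L, (k : R) * s k * (w n * h (n - k)) := by
        rw [Finset.mul_sum]
        exact Finset.sum_congr rfl fun k _ => by ring

/-- the quantum spectral curve equation `(β D − S(R₊)) Ψ⁺₀ = 0`,
i.e. `β • (D Ψ⁺₀) = Σ_{k=1}^L k s_k R₊^k Ψ⁺₀`. -/
theorem quantum_spectral_curve (R : Type*) [CommRing R] (β γ : R) (G : R[X])
    (hG : G.coeff 0 = 1)
    (ρ : ℤ → Rˣ) (hρ0 : ρ 0 = 1)
    (hρ : ∀ n : ℤ, (ρ n : R) = γ * G.eval ((n : R) * β) * (ρ (n - 1) : R))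
    (L : ℕ) (hL : 1 ≤ L) (s : ℕ → R)
    (h : ℤ → R) (h0 : h 0 = 1) (hneg : ∀ n : ℤ, n < 0 → h n = 0)
    (hrec : ∀ n : ℤ, 1 ≤ n →
      β * (n : R) * h n = ∑ k ∈ Finset.Icc 1 L, (k : R) * s k * h (n - (k : ℤ)))
    (Ψ0 : LaurentSeries R)
    (hΨ0 : ∀ n : ℤ, Ψ0.coeff n = γ * (ρ (n - 1) : R) * h n) :
    β • (eulerD R Ψ0) =
      ∑ k ∈ Finset.Icc 1 L, ((k : R) * s k) • ((Rplus R β γ G ^ k) Ψ0) :=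
  quantum_spectral_curve_general R β γ G ρ hρ L s h hneg hrec Ψ0 hΨ0
end

section
/- The recursion operator R₊ is the conjugate of multiplication by x by the diagonal operator determined by the content-product coefficients: R₊ = C ∘ M_x ∘ C⁻¹ as R-linear endomorphisms of formal Laurent series, where C is the invertible diagonal operator (C f)_n = ρ_{n−1} • f_n and M_x is multiplication by x. (This is the concrete form of the identity R₊ = e^{T(D−1)} ∘ x ∘ e^{−T(D−1)}, where e^{T_j} = ρ_j.) -/
open Polynomial

/-- The diagonal operator `(C f)_n = d n • f_n` on formal Laurent series. -/
noncomputable def diagOp (R : Type*) [CommRing R] (d : ℤ → R) :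
    Module.End R (LaurentSeries R) where
  toFun f :=
    { coeff := fun n => d n * f.coeff n
      isPWO_support' := f.isPWO_support'.mono (fun n hn => by
        simp only [Function.mem_support, ne_eq] at hn ⊢
        exact fun h => hn (by rw [h, mul_zero])) }
  map_add' f g := by
    ext n
    simp [mul_add]
  map_smul' r f := by
    ext n
    simp only [HahnSeries.coeff_smul, RingHom.id_apply, smul_eq_mul]
    ring

/-! Every polynomial in the Euler operator is diagonal in the monomial basis, `G(βD)` acting on
`xⁿ` by `G(nβ)`, and moving a diagonal operator past multiplication by `x` shifts its index by one.
Hence both sides are a diagonal operator followed by `x`, and the recursion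
`ρ_{n-1} = γ G((n-1)β) ρ_{n-2}` says exactly that the two diagonals agree. -/

section DiagonalOperators

variable {R : Type*} [CommRing R]

lemma diagOp_coeff (d : ℤ → R) (f : LaurentSeries R) (n : ℤ) :
    (diagOp R d f).coeff n = d n * f.coeff n := rfl

lemma mulX_coeff (f : LaurentSeries R) (n : ℤ) :
    (mulX R f).coeff n = f.coeff (n - 1) := by
  have h := HahnSeries.coeff_single_mul_add (r := (1 : R)) (x := f) (a := n - 1) (b := 1)
  rwa [sub_add_cancel, one_mul] at h

lemma diagOp_one : diagOp R 1 = LinearMap.id := by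
  ext f n
  simp [diagOp_coeff]

lemma diagOp_comp_diagOp (d e : ℤ → R) : diagOp R d ∘ₗ diagOp R e = diagOp R (d * e) := by
  ext f n
  simp [diagOp_coeff, mul_assoc]

lemma smul_diagOp (c : R) (d : ℤ → R) : c • diagOp R d = diagOp R (c • d) := by
  ext f n
  simp [diagOp_coeff, mul_assoc]

lemma diagOp_pow (d : ℤ → R) (k : ℕ) : diagOp R d ^ k = diagOp R (d ^ k) := by
  induction k with
  | zero => rw [pow_zero, pow_zero, diagOp_one]; rfl
  | succ k ih => rw [pow_succ, Module.End.mul_eq_comp, ih, diagOp_comp_diagOp, pow_succ]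

lemma aeval_diagOp (d : ℤ → R) (G : R[X]) :
    Polynomial.aeval (diagOp R d) G = diagOp R (fun n => G.eval (d n)) := by
  induction G using Polynomial.induction_on' with
  | add p q hp hq =>
    ext f n
    simp [hp, hq, diagOp_coeff, add_mul]
  | monomial k a =>
    ext f n
    simp [aeval_monomial, diagOp_pow, diagOp_coeff, mul_assoc]

lemma smul_eulerD (β : R) : β • eulerD R = diagOp R (fun n => (n : R) * β) := by
  ext f n
  simp only [eulerD, zsmul_eq_mul, LinearMap.smul_apply, LinearMap.coe_mk, AddHom.coe_mk,
    HahnSeries.coeff_smul, smul_eq_mul, diagOp_coeff]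
  ring

lemma mulX_comp_diagOp (d : ℤ → R) :
    mulX R ∘ₗ diagOp R d = diagOp R (fun n => d (n - 1)) ∘ₗ mulX R := by
  ext f n
  simp [diagOp_coeff, mulX_coeff]

end DiagonalOperators

theorem Rplus_conjugation_general (R : Type*) [CommRing R] (β γ : R) (G : Polynomial R)
    (ρ : ℤ → Rˣ)
    (hρ : ∀ n : ℤ, (ρ n : R) = γ * G.eval ((n : R) * β) * (ρ (n - 1) : R)) :
    diagOp R (fun n => (ρ (n - 1) : R)) ∘ₗ diagOp R (fun n => (((ρ (n - 1))⁻¹ : Rˣ) : R)) =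
        LinearMap.id ∧
    diagOp R (fun n => (((ρ (n - 1))⁻¹ : Rˣ) : R)) ∘ₗ diagOp R (fun n => (ρ (n - 1) : R)) =
        LinearMap.id ∧
    Rplus R β γ G =
      diagOp R (fun n => (ρ (n - 1) : R)) ∘ₗ mulX R ∘ₗ
        diagOp R (fun n => (((ρ (n - 1))⁻¹ : Rˣ) : R)) := by
  refine ⟨?_, ?_, ?_⟩
  · rw [diagOp_comp_diagOp, ← diagOp_one]; congr 1; ext n; simp
  · rw [diagOp_comp_diagOp, ← diagOp_one]; congr 1; ext n; simp
  · have hratio (n : ℤ) : γ * G.eval (((n - 1 : ℤ) : R) * β) =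
        (ρ (n - 1) : R) * ((ρ (n - 1 - 1))⁻¹ : Rˣ) := by
      rw [hρ (n - 1), mul_assoc, Units.mul_inv, mul_one]
    calc Rplus R β γ G = γ • (mulX R ∘ₗ diagOp R (fun n => G.eval ((n : R) * β))) := by
          rw [Rplus, smul_eulerD, aeval_diagOp]
      _ = diagOp R (fun n => γ * G.eval (((n - 1 : ℤ) : R) * β)) ∘ₗ mulX R := by
          rw [mulX_comp_diagOp, ← LinearMap.smul_comp, smul_diagOp]
          rfl
      _ = _ := by
          rw [mulX_comp_diagOp, ← LinearMap.comp_assoc, diagOp_comp_diagOp]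
          simp_rw [hratio]
          rfl

/-- `R₊ = C ∘ M_x ∘ C⁻¹`, where `C` is the invertible diagonal operator
`(C f)_n = ρ_{n−1} • f_n`. -/
theorem Rplus_conjugation (R : Type*) [CommRing R] (β γ : R) (G : Polynomial R)
    (hG : G.coeff 0 = 1)
    (ρ : ℤ → Rˣ) (hρ0 : ρ 0 = 1)
    (hρ : ∀ n : ℤ, (ρ n : R) = γ * G.eval ((n : R) * β) * (ρ (n - 1) : R)) :
    diagOp R (fun n => (ρ (n - 1) : R)) ∘ₗ diagOp R (fun n => (((ρ (n - 1))⁻¹ : Rˣ) : R)) =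
        LinearMap.id ∧
    diagOp R (fun n => (((ρ (n - 1))⁻¹ : Rˣ) : R)) ∘ₗ diagOp R (fun n => (ρ (n - 1) : R)) =
        LinearMap.id ∧
    Rplus R β γ G =
      diagOp R (fun n => (ρ (n - 1) : R)) ∘ₗ mulX R ∘ₗ
        diagOp R (fun n => (((ρ (n - 1))⁻¹ : Rˣ) : R)) :=
  Rplus_conjugation_general R β γ G ρ hρ
end
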